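/- Let π ∈ ℝⁿ, δ > 0, and take the cost c(u,w) = ‖u − w‖₂. Then inf over probability measures P on ℝⁿ with C(P,Q) ≤ δ of E_P[⟪π, R⟫] equals (1/N) Σ_{i=1}^N ⟪π, Rᵢ⟫ − δ‖π‖₂. (Every P with C(P,Q) ≤ δ has finite first moment, so the expectation is well-defined and finite.) -/

import Mathlib

open MeasureTheory
open scoped ENNReal RealInnerProductSpace BigOperators

/-- The optimal transport cost between two measures on `ℝⁿ` with cost function `c`. -/
noncomputable def transportCost {n : ℕ}
    (c : EuclideanSpace ℝ (Fin n) → EuclideanSpace ℝ (Fin n) → ℝ≥0∞)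
    (μ ν : Measure (EuclideanSpace ℝ (Fin n))) : ℝ≥0∞ :=
  ⨅ (γ : Measure (EuclideanSpace ℝ (Fin n) × EuclideanSpace ℝ (Fin n)))
    (_ : γ.map Prod.fst = μ) (_ : γ.map Prod.snd = ν),
    ∫⁻ p, c p.1 p.2 ∂γ

/-- The empirical measure `Q = (1/N) ∑ᵢ δ_{Rᵢ}`. -/
noncomputable def empirical {n N : ℕ} (R : Fin N → EuclideanSpace ℝ (Fin n)) :
    Measure (EuclideanSpace ℝ (Fin n)) :=
  (N : ℝ≥0∞)⁻¹ • ∑ i, Measure.dirac (R i)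

/-!
The functional `x ↦ ⟪π, x⟫` is `‖π‖`-Lipschitz, so along any coupling of `P` and `Q` its mean
moves by at most `‖π‖` times the transport cost; hence every feasible `P` has mean at least
`E_Q⟪π, R⟫ - δ‖π‖`. Translating `Q` by `v = -(δ / ‖π‖) π`, coupled to `Q` by `x ↦ (x + v, x)`,
costs `‖v‖ ≤ δ` and attains this bound.
-/

open scoped NNReal

section Empirical

variable {n N : ℕ} (R : Fin N → EuclideanSpace ℝ (Fin n)) {F : Type*} [NormedAddCommGroup F]

theorem isProbabilityMeasure_empirical (hN : 0 < N) : IsProbabilityMeasure (empirical R) :=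
  ⟨by simpa [empirical] using
    ENNReal.inv_mul_cancel (Nat.cast_ne_zero.2 hN.ne') (ENNReal.natCast_ne_top N)⟩

theorem integrable_empirical (f : EuclideanSpace ℝ (Fin n) → F) :
    Integrable f (empirical R) := by
  rcases N.eq_zero_or_pos with rfl | hN
  · simp [empirical]
  exact (integrable_finsetSum_measure.2 fun i _ => integrable_dirac enorm_lt_top).smul_measure
    (by simpa using hN.ne')

theorem integral_empirical [NormedSpace ℝ F] [CompleteSpace F]
    (f : EuclideanSpace ℝ (Fin n) → F) :
    ∫ x, f x ∂(empirical R) = (N : ℝ)⁻¹ • ∑ i, f (R i) := by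
  rw [empirical, integral_smul_measure,
    integral_finsetSum_measure fun i _ => integrable_dirac enorm_lt_top]
  simp only [integral_dirac, ENNReal.toReal_inv, ENNReal.toReal_natCast]

end Empirical

theorem integral_comp_snd_sub_integral_comp_fst_le {X : Type*} [PseudoMetricSpace X]
    [MeasurableSpace X] [OpensMeasurableSpace X] {γ : Measure (X × X)} {f : X → ℝ} {K : ℝ≥0}
    (hf : LipschitzWith K f) (hf₂ : Integrable (fun p => f p.2) γ)
    (hdist : Integrable (fun p => dist p.1 p.2) γ) :
    ∫ p, f p.2 ∂γ - ∫ p, f p.1 ∂γ ≤ K * ∫ p, dist p.1 p.2 ∂γ := by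
  have hlip (p : X × X) : |f p.2 - f p.1| ≤ K * dist p.1 p.2 := by
    rw [dist_comm, ← Real.dist_eq]
    exact hf.dist_le_mul _ _
  have hdiff : Integrable (fun p => f p.2 - f p.1) γ :=
    (hdist.const_mul K).mono' (hf₂.aestronglyMeasurable.sub
        (hf.continuous.measurable.comp measurable_fst).aestronglyMeasurable)
      (.of_forall hlip)
  have hf₁ : Integrable (fun p => f p.1) γ :=
    (hf₂.sub hdiff).congr (.of_forall fun p => sub_sub_cancel _ _)
  rw [← integral_sub hf₂ hf₁, ← integral_const_mul]
  exact integral_mono hdiff (hdist.const_mul K) fun p => (le_abs_self _).trans (hlip p)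

theorem integral_sub_integral_le_of_transportCost_le {n : ℕ}
    {μ ν : Measure (EuclideanSpace ℝ (Fin n))} {f : EuclideanSpace ℝ (Fin n) → ℝ} {K : ℝ≥0}
    (hf : LipschitzWith K f) (hfν : Integrable f ν) {δ : ℝ} (hδ : 0 ≤ δ)
    (h : transportCost (fun u w => ENNReal.ofReal ‖u - w‖) μ ν ≤ ENNReal.ofReal δ) :
    ∫ x, f x ∂ν - ∫ x, f x ∂μ ≤ K * δ := by
  -- The infimum defining `transportCost` need not be attained, so we bound the difference for
  -- every `η > δ` and let `η ↓ δ`.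
  have hcoupling : ∀ η > δ, ∫ x, f x ∂ν - ∫ x, f x ∂μ ≤ K * η := by
    intro η hη
    have hlt : transportCost (fun u w => ENNReal.ofReal ‖u - w‖) μ ν < ENNReal.ofReal η :=
      h.trans_lt ((ENNReal.ofReal_lt_ofReal_iff (hδ.trans_lt hη)).2 hη)
    simp only [transportCost, iInf_lt_iff, ← dist_eq_norm] at hlt
    obtain ⟨γ, rfl, rfl, hγ⟩ := hlt
    have hmeas : AEStronglyMeasurable (fun p => dist p.1 p.2) γ :=
      continuous_dist.aestronglyMeasurable
    have hdist : Integrable (fun p => dist p.1 p.2) γ :=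
      ⟨hmeas, (hasFiniteIntegral_iff_ofReal (.of_forall fun _ => dist_nonneg)).2
        (hγ.trans ENNReal.ofReal_lt_top)⟩
    have hdist_le : ∫ p, dist p.1 p.2 ∂γ ≤ η := by
      rw [integral_eq_lintegral_of_nonneg_ae (.of_forall fun _ => dist_nonneg) hmeas]
      exact ENNReal.toReal_le_of_le_ofReal (hδ.trans hη.le) hγ.le
    rw [integrable_map_measure hf.continuous.aestronglyMeasurable measurable_snd.aemeasurable]
      at hfν
    rw [integral_map measurable_snd.aemeasurable hf.continuous.aestronglyMeasurable,
      integral_map measurable_fst.aemeasurable hf.continuous.aestronglyMeasurable]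
    exact (integral_comp_snd_sub_integral_comp_fst_le hf hfν hdist).trans (by gcongr)
  exact ge_of_tendsto ((continuous_const.mul continuous_id).tendsto δ |>.mono_left
    nhdsWithin_le_nhds) (eventually_nhdsWithin_of_forall (s := Set.Ioi δ) hcoupling)

theorem transportCost_map_le {n : ℕ}
    (c : EuclideanSpace ℝ (Fin n) → EuclideanSpace ℝ (Fin n) → ℝ≥0∞)
    (ν : Measure (EuclideanSpace ℝ (Fin n)))
    {T : EuclideanSpace ℝ (Fin n) → EuclideanSpace ℝ (Fin n)} (hT : Measurable T) :
    transportCost c (ν.map T) ν ≤ ∫⁻ x, c (T x) x ∂ν := by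
  have hgraph : Measurable fun x => (T x, x) := hT.prodMk measurable_id
  refine iInf₂_le_of_le (ν.map fun x => (T x, x)) ?_ (iInf_le_of_le ?_ (lintegral_map_le _ _))
  · rw [Measure.map_map measurable_fst hgraph]
    rfl
  · rw [Measure.map_map measurable_snd hgraph]
    exact Measure.map_id

theorem transportCost_map_add_const_le {n : ℕ} (ν : Measure (EuclideanSpace ℝ (Fin n)))
    [IsProbabilityMeasure ν] (v : EuclideanSpace ℝ (Fin n)) :
    transportCost (fun u w => ENNReal.ofReal ‖u - w‖) (ν.map (· + v)) ν ≤ ENNReal.ofReal ‖v‖ :=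
  (transportCost_map_le _ ν (measurable_add_const v)).trans_eq (by simp)

section InnerProductSpace

variable {E : Type*} [NormedAddCommGroup E] [InnerProductSpace ℝ E]

theorem exists_norm_le_inner_eq_neg (π : E) {δ : ℝ} (hδ : 0 ≤ δ) :
    ∃ v : E, ‖v‖ ≤ δ ∧ ⟪π, v⟫ = -(δ * ‖π‖) := by
  rcases eq_or_ne π 0 with rfl | hπ
  · exact ⟨0, by simpa using hδ, by simp⟩
  refine ⟨-((δ / ‖π‖) • π), ?_, ?_⟩
  · rw [norm_neg, norm_smul, Real.norm_of_nonneg (by positivity),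
      div_mul_cancel₀ _ (norm_ne_zero_iff.2 hπ)]
  · rw [inner_neg_right, real_inner_smul_right, real_inner_self_eq_norm_mul_norm]
    field_simp

theorem lipschitzWith_inner_left (π : E) : LipschitzWith ‖π‖₊ fun x => ⟪π, x⟫ :=
  LipschitzWith.of_dist_le_mul fun x y => by
    simpa [dist_eq_norm, inner_sub_right] using abs_real_inner_le_norm π (x - y)

theorem integral_inner_map_add_const [MeasurableSpace E] [BorelSpace E] (μ : Measure E)
    [IsProbabilityMeasure μ] {π : E} (hπ : Integrable (fun x => ⟪π, x⟫) μ) (v : E) :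
    ∫ x, ⟪π, x⟫ ∂(μ.map (· + v)) = ∫ x, ⟪π, x⟫ ∂μ + ⟪π, v⟫ := by
  rw [integral_map (measurable_add_const v).aemeasurable
    (continuous_const.inner continuous_id).aestronglyMeasurable]
  simp only [inner_add_right]
  rw [integral_add hπ (integrable_const _), integral_const, probReal_univ, one_smul]

end InnerProductSpace

/-- Feasible-region duality for `κ = 1` (from the proof of Proposition 4.1):
`inf_{P : C(P,Q) ≤ δ} E_P[⟪π, R⟫] = (1/N) ∑ᵢ ⟪π, Rᵢ⟫ − δ‖π‖₂`,
with the cost `c(u,w) = ‖u − w‖₂`. -/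
theorem worst_case_mean_k1 (n N : ℕ) (hN : 0 < N)
    (R : Fin N → EuclideanSpace ℝ (Fin n))
    (π : EuclideanSpace ℝ (Fin n)) (δ : ℝ) (hδ : 0 < δ) :
    (⨅ (P : Measure (EuclideanSpace ℝ (Fin n)))
        (_ : IsProbabilityMeasure P)
        (_ : transportCost (fun u w => ENNReal.ofReal ‖u - w‖) P (empirical R)
          ≤ ENNReal.ofReal δ),
        ((∫ x, ⟪π, x⟫ ∂P : ℝ) : EReal)) =
    (((N : ℝ)⁻¹ * ∑ i : Fin N, ⟪π, R i⟫ - δ * ‖π‖ : ℝ) : EReal) := by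
  have := isProbabilityMeasure_empirical R hN
  have hQ := integrable_empirical R fun x => ⟪π, x⟫
  rw [← smul_eq_mul, ← integral_empirical]
  refine le_antisymm ?_ (le_iInf₂ fun P _ => le_iInf fun hP => ?_)
  · obtain ⟨v, hv, hπv⟩ := exists_norm_le_inner_eq_neg π hδ.le
    have hcost := (transportCost_map_add_const_le (empirical R) v).trans
      (ENNReal.ofReal_le_ofReal hv)
    have hprob := Measure.isProbabilityMeasure_map (μ := empirical R)
      (measurable_add_const v).aemeasurable
    refine (iInf₂_le _ hprob).trans ((iInf_le _ hcost).trans_eq ?_)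
    rw [integral_inner_map_add_const _ hQ, hπv, sub_eq_add_neg]
  · have hlower := integral_sub_integral_le_of_transportCost_le (lipschitzWith_inner_left π) hQ
      hδ.le hP
    rw [coe_nnnorm] at hlower
    exact EReal.coe_le_coe_iff.2 (by linarith)
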